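/- The d×d matrix W_2 := (1/√d) Σ_{i,j=0}^{d−1} (−1)^{δ_{j,0}} ω^{−2i/m + ij + j/2} |d−1−i⟩⟨j| is unitary and satisfies W_2 Z_d W_2† = O_{2,2} and W_2 T_{d,m} W_2† = O_{2,3}. -/

import Mathlib

open Matrix

/-- `omg d t` is ω^t = exp(2πi·t/d), where ω = exp(2πi/d). -/
noncomputable def omg (d : ℕ) (t : ℝ) : ℂ :=
  Complex.exp ((2 * Real.pi * t / d : ℝ) * Complex.I)

/-- Z_d = diag(1, ω, …, ω^{d−1}). -/
noncomputable def Zmat (d : ℕ) : Matrix (Fin d) (Fin d) ℂ :=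
  Matrix.diagonal fun i => omg d (i : ℝ)

/-- T_{d,m} = Σ_i ω^{i+1/m}|i⟩⟨i| − (2i/d) sin(π/m) Σ_{i,j} (−1)^{δ_{i0}+δ_{j0}}
ω^{(i+j)/2−(d−2)/(2m)} |i⟩⟨j|. -/
noncomputable def Tmat (d m : ℕ) : Matrix (Fin d) (Fin d) ℂ :=
  Matrix.of fun i j =>
    (if i = j then omg d ((i : ℝ) + 1 / m) else 0) -
      (2 * Complex.I / d) * (Real.sin (Real.pi / m) : ℂ) *
        ((-1 : ℂ) ^ (((if (i : ℕ) = 0 then 1 else 0) + (if (j : ℕ) = 0 then 1 else 0)) : ℕ)) *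
        omg d (((i : ℝ) + j) / 2 - ((d : ℝ) - 2) / (2 * m))

/-- ζ_m(x) = x/m. -/
noncomputable def zet (m x : ℕ) : ℝ := (x : ℝ) / m

/-- O_{2,x} = Σ_{i=0}^{d−2} ω^{ζ_m(x)} |i+1⟩⟨i| + ω^{(1−d)ζ_m(x)} |0⟩⟨d−1|. -/
noncomputable def Otwo (d m x : ℕ) : Matrix (Fin d) (Fin d) ℂ :=
  Matrix.of fun i j =>
    (if (i : ℕ) = (j : ℕ) + 1 then omg d (zet m x) else 0) +
      (if (i : ℕ) = 0 ∧ (j : ℕ) = d - 1 then omg d ((1 - (d : ℝ)) * zet m x) else 0)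

/-- W_2 = (1/√d) Σ_{i,j} (−1)^{δ_{j0}} ω^{−2i/m+ij+j/2} |d−1−i⟩⟨j|, written entrywise:
(W_2)_{r,j} corresponds to i = d−1−r. -/
noncomputable def Wtwo (d m : ℕ) : Matrix (Fin d) (Fin d) ℂ :=
  Matrix.of fun r j =>
    ((1 / Real.sqrt d : ℝ) : ℂ) * ((-1 : ℂ) ^ ((if (j : ℕ) = 0 then 1 else 0) : ℕ)) *
      omg d (-(2 * ((d - 1 - (r : ℕ) : ℕ) : ℝ)) / m +
        ((d - 1 - (r : ℕ) : ℕ) : ℝ) * (j : ℝ) + (j : ℝ) / 2)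

set_option linter.unusedVariables false in
lemma omg_add (d : ℕ) (s t : ℝ) : omg d (s + t) = omg d s * omg d t := by
  rw [omg, omg, omg, ← Complex.exp_add]
  congr 1
  push_cast
  ring

lemma omg_zero (d : ℕ) : omg d 0 = 1 := by simp [omg]

lemma conj_omg (d : ℕ) (t : ℝ) : (starRingEnd ℂ) (omg d t) = omg d (-t) := by
  rw [omg, omg, ← Complex.exp_conj, _root_.map_mul, Complex.conj_I, Complex.conj_ofReal]
  congr 1
  push_cast
  ring

lemma omg_pow (d : ℕ) (t : ℝ) (n : ℕ) : omg d t ^ n = omg d (n * t) := by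
  rw [omg, omg, ← Complex.exp_nat_mul]
  congr 1
  push_cast
  ring

lemma omg_int_eq_one_iff (d : ℕ) (hd : 0 < d) (k : ℤ) :
    omg d (k : ℝ) = 1 ↔ (d : ℤ) ∣ k := by
  rw [omg, Complex.exp_eq_one_iff]
  have hπ : 0 < Real.pi := Real.pi_pos
  have hd' : (0:ℝ) < (d : ℝ) := by exact_mod_cast hd
  constructor
  · rintro ⟨n, hn⟩
    have h3 := congrArg Complex.im hn
    simp at h3
    refine ⟨n, ?_⟩
    have : (k : ℝ) = d * n := by
      field_simp at h3
      nlinarith [h3]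
    exact_mod_cast this
  · rintro ⟨n, rfl⟩
    refine ⟨n, ?_⟩
    have h : (2 * Real.pi * (((d:ℤ) * n : ℤ) : ℝ) / d : ℝ) = n * (2 * Real.pi) := by
      push_cast
      field_simp
    rw [h]
    push_cast
    ring

lemma sum_omg (d : ℕ) (hd : 0 < d) (k : ℤ) :
    ∑ j : Fin d, omg d ((k : ℝ) * ((j : ℕ) : ℝ)) = if (d:ℤ) ∣ k then (d:ℂ) else 0 := by
  have h1 : ∀ j : Fin d, omg d ((k:ℝ) * ((j:ℕ):ℝ)) = omg d (k:ℝ) ^ (j:ℕ) := by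
    intro j
    rw [omg_pow]
    ring_nf
  simp only [h1]
  rw [Fin.sum_univ_eq_sum_range (fun j => omg d (k:ℝ) ^ j)]
  by_cases hdvd : (d:ℤ) ∣ k
  · rw [if_pos hdvd, (omg_int_eq_one_iff d hd k).2 hdvd]
    simp
  · rw [if_neg hdvd]
    have hne : omg d (k:ℝ) ≠ 1 := fun h => hdvd ((omg_int_eq_one_iff d hd k).1 h)
    have hpow : omg d (k:ℝ) ^ d = 1 := by
      rw [omg_pow]
      have : ((d:ℕ):ℝ) * (k:ℝ) = (((d * k : ℤ)):ℝ) := by push_cast; ring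
      rw [this]
      exact (omg_int_eq_one_iff d hd _).2 ⟨k, rfl⟩
    rw [geom_sum_eq hne, hpow]
    simp

lemma cast_idx (d : ℕ) (hd : 0 < d) (r : Fin d) :
    ((d - 1 - (r:ℕ) : ℕ) : ℝ) = (d:ℝ) - 1 - ((r:ℕ):ℝ) := by
  have h1 : (r:ℕ) ≤ d - 1 := Nat.le_sub_one_of_lt r.isLt
  rw [Nat.cast_sub h1, Nat.cast_sub hd]
  simp

lemma conj_Wtwo (d m : ℕ) (s j : Fin d) :
    (starRingEnd ℂ) (Wtwo d m s j) =
    ((1 / Real.sqrt d : ℝ) : ℂ) * ((-1 : ℂ) ^ ((if (j : ℕ) = 0 then 1 else 0) : ℕ)) *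
      omg d (-(-(2 * ((d - 1 - (s : ℕ) : ℕ) : ℝ)) / m +
        ((d - 1 - (s : ℕ) : ℕ) : ℝ) * (j : ℝ) + (j : ℝ) / 2)) := by
  simp only [Wtwo, Matrix.of_apply, _root_.map_mul, conj_omg, Complex.conj_ofReal, _root_.map_pow,
    map_neg, _root_.map_one]

lemma sqrt_mul (d : ℕ) (hd : 0 < d) :
    ((1 / Real.sqrt d : ℝ) : ℂ) * ((1 / Real.sqrt d : ℝ) : ℂ) = (1/d : ℂ) := by
  have : (1 / Real.sqrt d : ℝ) * (1 / Real.sqrt d : ℝ) = 1 / d := by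
    rw [div_mul_div_comm, Real.mul_self_sqrt (by positivity)]
    norm_num
  rw [← Complex.ofReal_mul, this]
  push_cast
  ring

lemma sign_sq (n : ℕ) : ((-1 : ℂ) ^ n) * ((-1 : ℂ) ^ n) = 1 := by
  rw [← pow_add, ← two_mul, pow_mul]
  norm_num

lemma sumA (d m : ℕ) (hd : 2 ≤ d) (r s : Fin d) (e : ℤ) (b : ℝ) :
    ∑ j : Fin d, Wtwo d m r j * omg d ((e:ℝ) * ((j:ℕ):ℝ) + b) * (starRingEnd ℂ) (Wtwo d m s j)
      = (1/d : ℂ) * omg d (b - 2*(((s:ℕ):ℝ) - ((r:ℕ):ℝ))/m) *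
        (if (d:ℤ) ∣ (((s:ℕ):ℤ) - ((r:ℕ):ℤ) + e) then (d:ℂ) else 0) := by
  have hd0 : 0 < d := by omega
  have hpt : ∀ j : Fin d,
      Wtwo d m r j * omg d ((e:ℝ) * ((j:ℕ):ℝ) + b) * (starRingEnd ℂ) (Wtwo d m s j)
      = (1/d : ℂ) * omg d (b - 2*(((s:ℕ):ℝ) - ((r:ℕ):ℝ))/m) *
        omg d (((((s:ℕ):ℤ) - ((r:ℕ):ℤ) + e : ℤ):ℝ) * ((j:ℕ):ℝ)) := by
    intro j
    rw [conj_Wtwo]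
    simp only [Wtwo, Matrix.of_apply]
    rw [show ∀ (c ε x y z : ℂ), (c * ε * x) * y * (c * ε * z) = (c*c) * (ε*ε) * (x*y*z) from
      fun c ε x y z => by ring]
    rw [sqrt_mul d hd0, sign_sq, ← omg_add, ← omg_add, mul_one, mul_assoc, ← omg_add]
    congr 2
    rw [cast_idx d hd0 r, cast_idx d hd0 s]
    push_cast
    ring
  rw [Finset.sum_congr rfl (fun j _ => hpt j), ← Finset.mul_sum,
    sum_omg d hd0 (((s:ℕ):ℤ) - ((r:ℕ):ℤ) + e)]

lemma sumF (d m : ℕ) (hd : 2 ≤ d) (r : Fin d) :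
    ∑ j : Fin d, Wtwo d m r j * ((-1:ℂ) ^ ((if (j:ℕ) = 0 then 1 else 0) : ℕ)) *
        omg d (((j:ℕ):ℝ)/2)
      = ((1 / Real.sqrt d : ℝ) : ℂ) * omg d (-(2*((d:ℝ)-1-((r:ℕ):ℝ)))/m) *
        (if (d:ℤ) ∣ ((d:ℤ) - ((r:ℕ):ℤ)) then (d:ℂ) else 0) := by
  have hd0 : 0 < d := by omega
  have hpt : ∀ j : Fin d,
      Wtwo d m r j * ((-1:ℂ) ^ ((if (j:ℕ) = 0 then 1 else 0) : ℕ)) * omg d (((j:ℕ):ℝ)/2)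
      = ((1 / Real.sqrt d : ℝ) : ℂ) * omg d (-(2*((d:ℝ)-1-((r:ℕ):ℝ)))/m) *
        omg d (((((d:ℤ) - ((r:ℕ):ℤ)) : ℤ):ℝ) * ((j:ℕ):ℝ)) := by
    intro j
    simp only [Wtwo, Matrix.of_apply]
    rw [show ∀ (c ε x y : ℂ), (c * ε * x) * ε * y = c * (ε*ε) * (x*y) from
      fun c ε x y => by ring]
    rw [sign_sq, mul_one, ← omg_add, mul_assoc, ← omg_add]
    congr 2
    rw [cast_idx d hd0 r]
    push_cast
    ring
  rw [Finset.sum_congr rfl (fun j _ => hpt j), ← Finset.mul_sum,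
    sum_omg d hd0 ((d:ℤ) - ((r:ℕ):ℤ))]

lemma sumG (d m : ℕ) (hd : 2 ≤ d) (s : Fin d) :
    ∑ k : Fin d, ((-1:ℂ) ^ ((if (k:ℕ) = 0 then 1 else 0) : ℕ)) * omg d (((k:ℕ):ℝ)/2) *
        (starRingEnd ℂ) (Wtwo d m s k)
      = ((1 / Real.sqrt d : ℝ) : ℂ) * omg d ((2*((d:ℝ)-1-((s:ℕ):ℝ)))/m) *
        (if (d:ℤ) ∣ (((s:ℕ):ℤ) + 1 - (d:ℤ)) then (d:ℂ) else 0) := by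
  have hd0 : 0 < d := by omega
  have hpt : ∀ k : Fin d,
      ((-1:ℂ) ^ ((if (k:ℕ) = 0 then 1 else 0) : ℕ)) * omg d (((k:ℕ):ℝ)/2) *
        (starRingEnd ℂ) (Wtwo d m s k)
      = ((1 / Real.sqrt d : ℝ) : ℂ) * omg d ((2*((d:ℝ)-1-((s:ℕ):ℝ)))/m) *
        omg d ((((((s:ℕ):ℤ) + 1 - (d:ℤ)) : ℤ):ℝ) * ((k:ℕ):ℝ)) := by
    intro k
    rw [conj_Wtwo]
    rw [show ∀ (c ε x y : ℂ), ε * y * (c * ε * x) = c * (ε*ε) * (y*x) from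
      fun c ε x y => by ring]
    rw [sign_sq, mul_one, ← omg_add, mul_assoc, ← omg_add]
    congr 2
    rw [cast_idx d hd0 s]
    push_cast
    ring
  rw [Finset.sum_congr rfl (fun k _ => hpt k), ← Finset.mul_sum,
    sum_omg d hd0 (((s:ℕ):ℤ) + 1 - (d:ℤ))]

lemma dvd_window (d k : ℤ) (hd : 0 < d) (h1 : -d < k) (h2 : k ≤ d) (hdvd : d ∣ k) :
    k = 0 ∨ k = d := by
  rcases hdvd with ⟨n, rfl⟩
  have hn1 : -1 < n := by nlinarith
  have hn2 : n ≤ 1 := by nlinarith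
  interval_cases n
  · left; ring
  · right; ring

lemma exp_diff (θ : ℝ) :
    Complex.exp ((θ:ℝ) * Complex.I) - Complex.exp ((-θ:ℝ) * Complex.I)
      = 2 * Complex.I * (Real.sin θ : ℂ) := by
  have h : ((-θ:ℝ):ℂ) = -(θ:ℂ) := by push_cast; ring
  rw [h, Complex.exp_mul_I, neg_mul, ← neg_mul (θ:ℂ), Complex.exp_mul_I,
    Complex.cos_neg, Complex.sin_neg, Complex.ofReal_sin]
  ring

lemma key_id (d m : ℕ) (hd : 2 ≤ d) (hm : 2 ≤ m) :
    omg d ((3 - 2*(d:ℝ))/m) - 2 * Complex.I * (Real.sin (Real.pi/m) : ℂ) *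
        omg d ((6 - 5*(d:ℝ))/(2*m))
      = omg d ((1 - (d:ℝ)) * (3/m)) := by
  have hdne : ((d:ℝ)) ≠ 0 := by
    have : 0 < d := by omega
    exact_mod_cast this.ne'
  have hmne : ((m:ℝ)) ≠ 0 := by
    have : 0 < m := by omega
    exact_mod_cast this.ne'
  have he1 : omg d ((d:ℝ)/(2*m)) = Complex.exp ((Real.pi/m : ℝ) * Complex.I) := by
    have e1 : (2 * Real.pi * ((d:ℝ)/(2*m)) / d : ℝ) = Real.pi/m := by
      field_simp
    rw [omg, e1]
  have he2 : omg d (-((d:ℝ)/(2*m))) = Complex.exp ((-(Real.pi/m) : ℝ) * Complex.I) := by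
    have e2 : (2 * Real.pi * (-((d:ℝ)/(2*m))) / d : ℝ) = -(Real.pi/m) := by
      field_simp
    rw [omg, e2]
  have h1 : omg d ((3 - 2*(d:ℝ))/m)
      = omg d ((6 - 5*(d:ℝ))/(2*m)) * Complex.exp ((Real.pi/m : ℝ) * Complex.I) := by
    rw [← he1, ← omg_add]
    congr 1
    field_simp
    ring
  have h2 : omg d ((1 - (d:ℝ)) * (3/m))
      = omg d ((6 - 5*(d:ℝ))/(2*m)) * Complex.exp ((-(Real.pi/m) : ℝ) * Complex.I) := by
    rw [← he2, ← omg_add]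
    congr 1
    field_simp
    ring
  rw [h1, h2]
  linear_combination (omg d ((6 - 5*(d:ℝ))/(2*m))) * exp_diff (Real.pi/m)

lemma aux_unitary (d m : ℕ) (hd : 2 ≤ d) (hm : 2 ≤ m) : Wtwo d m ∈ Matrix.unitaryGroup (Fin d) ℂ := by
  rw [Matrix.mem_unitaryGroup_iff, Matrix.star_eq_conjTranspose]
  ext r s
  rw [Matrix.mul_apply]
  simp only [Matrix.conjTranspose_apply, RCLike.star_def]
  have hins : ∀ j : Fin d, Wtwo d m r j * (starRingEnd ℂ) (Wtwo d m s j)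
      = Wtwo d m r j * omg d (((0:ℤ):ℝ) * ((j:ℕ):ℝ) + 0) * (starRingEnd ℂ) (Wtwo d m s j) := by
    intro j
    norm_num [omg_zero]
  rw [Finset.sum_congr rfl (fun j _ => hins j), sumA d m hd r s 0 0]
  have hdC : ((d:ℂ)) ≠ 0 := by
    have : 0 < d := by omega
    exact_mod_cast this.ne'
  by_cases h : r = s
  · subst h
    rw [if_pos (by simp), Matrix.one_apply_eq]
    have : (0 - 2*(((r:ℕ):ℝ) - ((r:ℕ):ℝ))/m : ℝ) = 0 := by ring
    rw [this, omg_zero]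
    field_simp
  · have hns : ((s:ℕ):ℤ) - ((r:ℕ):ℤ) + 0 ≠ 0 := by
      have := Fin.val_ne_of_ne h
      omega
    rw [if_neg ?_, Matrix.one_apply_ne h, mul_zero]
    intro hdvd
    have h1 : -(d:ℤ) < ((s:ℕ):ℤ) - ((r:ℕ):ℤ) + 0 := by
      have := r.isLt; have := s.isLt; omega
    have h2 : ((s:ℕ):ℤ) - ((r:ℕ):ℤ) + 0 ≤ d := by
      have := s.isLt; omega
    rcases dvd_window d _ (by exact_mod_cast (by omega : 0 < d)) h1 h2 hdvd with h0 | h0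
    · exact hns h0
    · have := r.isLt; have := s.isLt; omega

lemma aux_Z (d m : ℕ) (hd : 2 ≤ d) (hm : 2 ≤ m) :
    Wtwo d m * Zmat d * (Wtwo d m)ᴴ = Otwo d m 2 := by
  have hd0 : 0 < d := by omega
  have hdC : ((d:ℂ)) ≠ 0 := by exact_mod_cast hd0.ne'
  have hmR : ((m:ℝ)) ≠ 0 := by
    have : 0 < m := by omega
    exact_mod_cast this.ne'
  ext r s
  rw [Matrix.mul_apply]
  simp only [Matrix.conjTranspose_apply, RCLike.star_def, Zmat, Matrix.mul_diagonal]
  have hins : ∀ j : Fin d, Wtwo d m r j * omg d ((j:ℕ):ℝ) * (starRingEnd ℂ) (Wtwo d m s j)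
      = Wtwo d m r j * omg d (((1:ℤ):ℝ) * ((j:ℕ):ℝ) + 0) * (starRingEnd ℂ) (Wtwo d m s j) := by
    intro j
    norm_num
  rw [Finset.sum_congr rfl (fun j _ => hins j), sumA d m hd r s 1 0]
  rw [Otwo, Matrix.of_apply]
  have hr := r.isLt
  have hs := s.isLt
  by_cases hc1 : (r:ℕ) = (s:ℕ) + 1
  · have hdvd : (d:ℤ) ∣ ((s:ℕ):ℤ) - ((r:ℕ):ℤ) + 1 := by
      have h0 : ((s:ℕ):ℤ) - ((r:ℕ):ℤ) + 1 = 0 := by omega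
      rw [h0]
      exact dvd_zero _
    rw [if_pos hdvd, if_pos hc1, if_neg (show ¬((r:ℕ) = 0 ∧ (s:ℕ) = d - 1) by omega), add_zero]
    have hrr : ((r:ℕ):ℝ) = ((s:ℕ):ℝ) + 1 := by exact_mod_cast hc1
    have : (0 - 2*(((s:ℕ):ℝ) - ((r:ℕ):ℝ))/m : ℝ) = zet m 2 := by
      rw [hrr, zet]
      push_cast
      field_simp
      ring
    rw [this]
    field_simp
  · by_cases hc2 : (r:ℕ) = 0 ∧ (s:ℕ) = d - 1
    · have hdvd : (d:ℤ) ∣ ((s:ℕ):ℤ) - ((r:ℕ):ℤ) + 1 := ⟨1, by omega⟩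
      rw [if_pos hdvd, if_neg hc1, if_pos hc2, zero_add]
      have hrr : ((r:ℕ):ℝ) = 0 := by exact_mod_cast hc2.1
      have hss : ((s:ℕ):ℝ) = (d:ℝ) - 1 := by
        rw [hc2.2, Nat.cast_sub (by omega)]
        simp
      have : (0 - 2*(((s:ℕ):ℝ) - ((r:ℕ):ℝ))/m : ℝ) = (1 - (d:ℝ)) * zet m 2 := by
        rw [hrr, hss, zet]
        push_cast
        field_simp
        ring
      rw [this]
      field_simp
    · have hnd : ¬ ((d:ℤ) ∣ ((s:ℕ):ℤ) - ((r:ℕ):ℤ) + 1) := by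
        intro hdvd
        rcases dvd_window d _ (by exact_mod_cast hd0) (by omega) (by omega) hdvd with h0 | h0 <;>
          omega
      rw [if_neg hnd, if_neg hc1, if_neg hc2, mul_zero, add_zero]

lemma aux_T (d m : ℕ) (hd : 2 ≤ d) (hm : 2 ≤ m) :
    Wtwo d m * Tmat d m * (Wtwo d m)ᴴ = Otwo d m 3 := by
  have hd0 : 0 < d := by omega
  have hdC : ((d:ℂ)) ≠ 0 := by exact_mod_cast hd0.ne'
  have hmR : ((m:ℝ)) ≠ 0 := by
    have : 0 < m := by omega
    exact_mod_cast (this).ne'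
  set q : ℝ := ((d:ℝ) - 2) / (2*m) with hq
  set CC : ℂ := (2 * Complex.I / d) * (Real.sin (Real.pi/m) : ℂ) * omg d (-q) with hCC
  ext r s
  have hr := r.isLt
  have hs := s.isLt
  rw [Matrix.mul_apply]
  simp only [Matrix.mul_apply, Matrix.conjTranspose_apply, RCLike.star_def, Tmat,
    Matrix.of_apply, mul_sub, Finset.sum_sub_distrib, sub_mul, Finset.sum_mul]
  -- diagonal part
  have hS1 : ∀ k : Fin d,
      ∑ j : Fin d, Wtwo d m r j * (if j = k then omg d ((j:ℝ) + 1/m) else 0) *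
        (starRingEnd ℂ) (Wtwo d m s k)
      = Wtwo d m r k * omg d (((1:ℤ):ℝ) * ((k:ℕ):ℝ) + 1/m) * (starRingEnd ℂ) (Wtwo d m s k) := by
    intro k
    rw [Finset.sum_congr rfl (fun j _ => by rw [mul_ite, mul_zero, ite_mul, zero_mul]),
      Finset.sum_ite_eq' Finset.univ k
        (fun j => Wtwo d m r j * omg d ((j:ℝ) + 1/m) * (starRingEnd ℂ) (Wtwo d m s k))]
    norm_num
  rw [Finset.sum_congr rfl (fun k _ => hS1 k), sumA d m hd r s 1 (1/m)]
  -- rank-one part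
  have homg : ∀ j k : Fin d, omg d (((j:ℝ) + (k:ℝ))/2 - q)
      = omg d ((j:ℝ)/2) * (omg d ((k:ℝ)/2) * omg d (-q)) := by
    intro j k
    rw [← omg_add, ← omg_add]
    congr 1
    ring
  have hpt2 : ∀ k j : Fin d,
      Wtwo d m r j * ((2 * Complex.I / d) * (Real.sin (Real.pi/m) : ℂ) *
        ((-1:ℂ) ^ (((if (j:ℕ) = 0 then 1 else 0) + (if (k:ℕ) = 0 then 1 else 0)) : ℕ)) *
        omg d (((j:ℝ) + (k:ℝ))/2 - q)) * (starRingEnd ℂ) (Wtwo d m s k)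
      = (CC * (((-1:ℂ) ^ ((if (k:ℕ) = 0 then 1 else 0) : ℕ)) * omg d (((k:ℕ):ℝ)/2) *
          (starRingEnd ℂ) (Wtwo d m s k))) *
        (Wtwo d m r j * ((-1:ℂ) ^ ((if (j:ℕ) = 0 then 1 else 0) : ℕ)) * omg d (((j:ℕ):ℝ)/2)) := by
    intro k j
    rw [pow_add, homg j k, hCC]
    ring
  rw [Finset.sum_congr rfl (fun k _ => Finset.sum_congr rfl (fun j _ => hpt2 k j))]
  simp only [← Finset.mul_sum]
  rw [sumF d m hd r]
  have hre : ∀ k : Fin d,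
      CC * (((-1:ℂ) ^ ((if (k:ℕ) = 0 then 1 else 0) : ℕ)) * omg d (((k:ℕ):ℝ)/2) *
          (starRingEnd ℂ) (Wtwo d m s k)) *
        (((1 / Real.sqrt d : ℝ) : ℂ) * omg d (-(2*((d:ℝ)-1-((r:ℕ):ℝ)))/m) *
          (if (d:ℤ) ∣ ((d:ℤ) - ((r:ℕ):ℤ)) then (d:ℂ) else 0))
      = (CC * (((1 / Real.sqrt d : ℝ) : ℂ) * omg d (-(2*((d:ℝ)-1-((r:ℕ):ℝ)))/m) *
          (if (d:ℤ) ∣ ((d:ℤ) - ((r:ℕ):ℤ)) then (d:ℂ) else 0))) *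
        (((-1:ℂ) ^ ((if (k:ℕ) = 0 then 1 else 0) : ℕ)) * omg d (((k:ℕ):ℝ)/2) *
          (starRingEnd ℂ) (Wtwo d m s k)) := by
    intro k
    ring
  rw [Finset.sum_congr rfl (fun k _ => hre k), ← Finset.mul_sum, sumG d m hd s]
  rw [Otwo, Matrix.of_apply]
  by_cases hc1 : (r:ℕ) = (s:ℕ) + 1
  · have hdvd1 : (d:ℤ) ∣ ((s:ℕ):ℤ) - ((r:ℕ):ℤ) + 1 := by
      have h0 : ((s:ℕ):ℤ) - ((r:ℕ):ℤ) + 1 = 0 := by omega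
      rw [h0]
      exact dvd_zero _
    have hnd2 : ¬ ((d:ℤ) ∣ (d:ℤ) - ((r:ℕ):ℤ)) := by
      intro hdvd
      rcases dvd_window d _ (by exact_mod_cast hd0) (by omega) (by omega) hdvd with h0 | h0 <;>
        omega
    rw [if_pos hdvd1, if_neg hnd2, if_pos hc1,
      if_neg (show ¬((r:ℕ) = 0 ∧ (s:ℕ) = d - 1) by omega)]
    simp only [mul_zero, zero_mul, sub_zero, add_zero]
    have hrr : ((r:ℕ):ℝ) = ((s:ℕ):ℝ) + 1 := by exact_mod_cast hc1
    have he : (1/(m:ℝ) - 2*(((s:ℕ):ℝ) - ((r:ℕ):ℝ))/m : ℝ) = zet m 3 := by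
      rw [hrr, zet]
      push_cast
      field_simp
      ring
    rw [he]
    field_simp
  · by_cases hc2 : (r:ℕ) = 0 ∧ (s:ℕ) = d - 1
    · have hdvd1 : (d:ℤ) ∣ ((s:ℕ):ℤ) - ((r:ℕ):ℤ) + 1 := ⟨1, by omega⟩
      have hdvd2 : (d:ℤ) ∣ (d:ℤ) - ((r:ℕ):ℤ) := ⟨1, by omega⟩
      have hdvd3 : (d:ℤ) ∣ ((s:ℕ):ℤ) + 1 - (d:ℤ) := by
        have h0 : ((s:ℕ):ℤ) + 1 - (d:ℤ) = 0 := by omega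
        rw [h0]
        exact dvd_zero _
      rw [if_pos hdvd1, if_pos hdvd2, if_pos hdvd3, if_neg hc1, if_pos hc2, zero_add]
      have hrr : ((r:ℕ):ℝ) = 0 := by exact_mod_cast hc2.1
      have hss : ((s:ℕ):ℝ) = (d:ℝ) - 1 := by
        rw [hc2.2, Nat.cast_sub (by omega)]
        simp
      have he1 : (1/(m:ℝ) - 2*(((s:ℕ):ℝ) - ((r:ℕ):ℝ))/m : ℝ) = (3 - 2*(d:ℝ))/m := by
        rw [hrr, hss]
        field_simp
        ring
      have he2 : (-(2*((d:ℝ)-1-((r:ℕ):ℝ)))/m : ℝ) = -(2*((d:ℝ)-1))/m := by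
        rw [hrr]
        ring
      have he3 : ((2*((d:ℝ)-1-((s:ℕ):ℝ)))/m : ℝ) = 0 := by
        rw [hss]
        ring_nf
      have hz3 : ((1 - (d:ℝ)) * zet m 3 : ℝ) = (1 - (d:ℝ)) * (3/m) := by
        rw [zet]
        norm_num
      rw [he1, he2, he3, omg_zero, hz3, ← key_id d m hd hm]
      have hccd : ((1/Real.sqrt d : ℝ):ℂ) * ((1/Real.sqrt d : ℝ):ℂ) * d = 1 := by
        rw [sqrt_mul d hd0]
        field_simp
      have h5 : omg d (-q) * omg d (-(2*((d:ℝ)-1))/m) = omg d ((6 - 5*(d:ℝ))/(2*m)) := by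
        rw [← omg_add]
        congr 1
        rw [hq]
        field_simp
        ring
      have hdd : (d:ℂ) * (d:ℂ)⁻¹ = 1 := mul_inv_cancel₀ hdC
      rw [hCC]
      linear_combination (omg d ((3 - 2*(d:ℝ))/m) - 2*Complex.I*(Real.sin (Real.pi/m):ℂ) *
          (omg d (-q) * omg d (-(2*((d:ℝ)-1))/m))) * hdd -
        (2*Complex.I*(Real.sin (Real.pi/m):ℂ) * omg d (-q) * omg d (-(2*((d:ℝ)-1))/m) *
          (d:ℂ) * (d:ℂ)⁻¹) * hccd -
        (2*Complex.I*(Real.sin (Real.pi/m):ℂ)) * h5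
    · have hnd1 : ¬ ((d:ℤ) ∣ ((s:ℕ):ℤ) - ((r:ℕ):ℤ) + 1) := by
        intro hdvd
        rcases dvd_window d _ (by exact_mod_cast hd0) (by omega) (by omega) hdvd with h0 | h0 <;>
          omega
      rw [if_neg hnd1, if_neg hc1, if_neg hc2]
      by_cases hr0 : (r:ℕ) = 0
      · have hnd3 : ¬ ((d:ℤ) ∣ ((s:ℕ):ℤ) + 1 - (d:ℤ)) := by
          intro hdvd
          rcases dvd_window d _ (by exact_mod_cast hd0) (by omega) (by omega) hdvd with h0 | h0 <;>
            omega
        rw [if_neg hnd3]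
        simp only [mul_zero, zero_mul, sub_zero, add_zero, zero_add]
      · have hnd2 : ¬ ((d:ℤ) ∣ (d:ℤ) - ((r:ℕ):ℤ)) := by
          intro hdvd
          rcases dvd_window d _ (by exact_mod_cast hd0) (by omega) (by omega) hdvd with h0 | h0 <;>
            omega
        rw [if_neg hnd2]
        simp only [mul_zero, zero_mul, sub_zero, add_zero, zero_add]

/-- W_2 is unitary with W_2 Z_d W_2† = O_{2,2} and W_2 T_{d,m} W_2† = O_{2,3}. -/
theorem stmt16 (d m : ℕ) (hd : 2 ≤ d) (hm : 2 ≤ m) :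
    Wtwo d m ∈ Matrix.unitaryGroup (Fin d) ℂ ∧
    Wtwo d m * Zmat d * (Wtwo d m)ᴴ = Otwo d m 2 ∧
    Wtwo d m * Tmat d m * (Wtwo d m)ᴴ = Otwo d m 3 := by
  exact ⟨aux_unitary d m hd hm, aux_Z d m hd hm, aux_T d m hd hm⟩
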